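/- arXiv:2209.01613 — 4 statements merged into one kernel-verified Lean document; each statement's English description precedes it below -/
import Mathlib

section
/- For all z, w in a finite-dimensional real inner product space X, V(z)/(16(1+|w|²)^{3/2}) ≤ V(z+w) − V(w) − ⟨V'(w), z⟩, where V(z) = √(1+|z|²) − 1 and V'(w) denotes the gradient of V at w. -/
/-!
Put `c = √(1 + ‖w‖²)`, `b = √(1 + ‖z + w‖²)` and `t = ⟪w, z⟫`, so that `b² = c² + ‖z‖² + 2t`
and the right-hand side equals `(bc − c² − t)/c`. Rationalising,
`(bc − c² − t)(bc + c² + t) = c²‖z‖² − t² ≥ ‖z‖²` by Cauchy–Schwarz, while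
`bc + c² + t ≤ 2c(c + ‖z‖)`; so the right-hand side is at least `‖z‖² / (2c²(c + ‖z‖))`.
This dominates `V(z) / (16c³)` because `V(z) ≤ min(‖z‖, ‖z‖²/2)`.
-/

noncomputable section

open scoped RealInnerProductSpace

/-- The reference integrand `V(z) := √(1+‖z‖²) − 1` on a normed space. -/
def Vfun {X : Type*} [NormedAddCommGroup X] (z : X) : ℝ :=
  Real.sqrt (1 + ‖z‖ ^ 2) - 1

theorem div_le_sub_sub_div_of_sq_eq {b c t x : ℝ} (hb : 0 ≤ b) (hc : 1 ≤ c) (hx : 0 ≤ x)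
    (hb2 : b ^ 2 = c ^ 2 + x ^ 2 + 2 * t) (ht : t ^ 2 ≤ x ^ 2 * (c ^ 2 - 1)) :
    x ^ 2 / (2 * c ^ 2 * (c + x)) ≤ b - c - t / c := by
  have hc0 : 0 < c := by linarith
  have htc : t ≤ c * x := (abs_le_of_sq_le_sq' (by nlinarith) (by positivity)).2
  have hbcx : b ≤ c + x := (sq_le_sq₀ hb (by positivity)).1 (by nlinarith)
  have hd : c ^ 2 + t ≤ b * c := (abs_le_of_sq_le_sq' (by nlinarith) (by positivity)).2
  have hprod : (b * c - c ^ 2 - t) * (b * c + c ^ 2 + t) = c ^ 2 * x ^ 2 - t ^ 2 := by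
    linear_combination c ^ 2 * hb2
  have hsum : b * c + c ^ 2 + t ≤ 2 * c * (c + x) := by nlinarith
  have key : x ^ 2 ≤ (b * c - c ^ 2 - t) * (2 * c * (c + x)) := by
    calc x ^ 2 ≤ c ^ 2 * x ^ 2 - t ^ 2 := by nlinarith
      _ = (b * c - c ^ 2 - t) * (b * c + c ^ 2 + t) := hprod.symm
      _ ≤ _ := mul_le_mul_of_nonneg_left hsum (by linarith)
  rw [show b - c - t / c = (b * c - c ^ 2 - t) / c by field_simp,
    div_le_div_iff₀ (by positivity) hc0]
  nlinarith

section

variable {X : Type*} [NormedAddCommGroup X]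

theorem Vfun_le_norm (z : X) : Vfun z ≤ ‖z‖ := by
  have : √(1 + ‖z‖ ^ 2) ≤ 1 + ‖z‖ :=
    (Real.sqrt_le_left (by positivity)).2 (by nlinarith [norm_nonneg z])
  unfold Vfun
  linarith

theorem Vfun_le_half_norm_sq (z : X) : Vfun z ≤ ‖z‖ ^ 2 / 2 := by
  have : √(1 + ‖z‖ ^ 2) ≤ 1 + ‖z‖ ^ 2 / 2 :=
    (Real.sqrt_le_left (by positivity)).2 (by nlinarith [sq_nonneg ‖z‖])
  unfold Vfun
  linarith

theorem Vfun_div_le_sq_div {c : ℝ} (hc : 1 ≤ c) (z : X) :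
    Vfun z / (16 * c ^ 3) ≤ ‖z‖ ^ 2 / (2 * c ^ 2 * (c + ‖z‖)) := by
  have hz := norm_nonneg z
  have h₁ := mul_le_mul_of_nonneg_left (Vfun_le_half_norm_sq z) (by linarith : 0 ≤ c)
  have h₂ := mul_le_mul_of_nonneg_left (Vfun_le_norm z) hz
  rw [div_le_div_iff₀ (by positivity) (by positivity)]
  have : Vfun z * (c + ‖z‖) ≤ 8 * c * ‖z‖ ^ 2 := by nlinarith
  nlinarith [mul_le_mul_of_nonneg_left this (by positivity : 0 ≤ 2 * c ^ 2)]

end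

theorem Vfun_add_sub_sub_inner_ge {X : Type*} [NormedAddCommGroup X] [InnerProductSpace ℝ X]
    (z w : X) :
    ‖z‖ ^ 2 / (2 * √(1 + ‖w‖ ^ 2) ^ 2 * (√(1 + ‖w‖ ^ 2) + ‖z‖)) ≤
      Vfun (z + w) - Vfun w - ⟪(√(1 + ‖w‖ ^ 2))⁻¹ • w, z⟫ := by
  have hc2 : √(1 + ‖w‖ ^ 2) ^ 2 = 1 + ‖w‖ ^ 2 := Real.sq_sqrt (by positivity)
  have hb2 : √(1 + ‖z + w‖ ^ 2) ^ 2 = 1 + ‖z + w‖ ^ 2 := Real.sq_sqrt (by positivity)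
  have hc : 1 ≤ √(1 + ‖w‖ ^ 2) := Real.one_le_sqrt.2 (le_add_of_nonneg_right (by positivity))
  have hcs : ⟪w, z⟫ ^ 2 ≤ ‖z‖ ^ 2 * (√(1 + ‖w‖ ^ 2) ^ 2 - 1) := by
    rw [hc2, add_sub_cancel_left, ← real_inner_self_eq_norm_sq, ← real_inner_self_eq_norm_sq,
      sq, mul_comm ⟪z, z⟫]
    exact real_inner_mul_inner_self_le w z
  have := div_le_sub_sub_div_of_sq_eq (Real.sqrt_nonneg _) hc (norm_nonneg z)
    (by rw [hb2, hc2, norm_add_sq_real, real_inner_comm]; ring) hcs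
  rw [real_inner_smul_left, inv_mul_eq_div]
  unfold Vfun
  linarith

theorem Vfun_shift_lower_bound_general {X : Type*} [NormedAddCommGroup X]
    [InnerProductSpace ℝ X] (z w : X) :
    Vfun z / (16 * (1 + ‖w‖ ^ 2) ^ ((3 : ℝ) / 2)) ≤
      Vfun (z + w) - Vfun w - ⟪(Real.sqrt (1 + ‖w‖ ^ 2))⁻¹ • w, z⟫ := by
  have hc : 1 ≤ √(1 + ‖w‖ ^ 2) := Real.one_le_sqrt.2 (le_add_of_nonneg_right (by positivity))
  have hpow : (1 + ‖w‖ ^ 2) ^ ((3 : ℝ) / 2) = √(1 + ‖w‖ ^ 2) ^ 3 := by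
    rw [Real.rpow_div_two_eq_sqrt _ (by positivity)]
    exact_mod_cast Real.rpow_natCast _ 3
  rw [hpow]
  exact (Vfun_div_le_sq_div hc z).trans (Vfun_add_sub_sub_inner_ge z w)

/-- For all `z, w` in a finite-dimensional real inner product space,
`V(z)/(16(1+‖w‖²)^{3/2}) ≤ V(z+w) − V(w) − ⟨V'(w), z⟩`, where
`V'(w) = w/√(1+‖w‖²)` is the gradient of `V` at `w`. -/
theorem Vfun_shift_lower_bound {X : Type*} [NormedAddCommGroup X]
    [InnerProductSpace ℝ X] [FiniteDimensional ℝ X] (z w : X) :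
    Vfun z / (16 * (1 + ‖w‖ ^ 2) ^ ((3 : ℝ) / 2)) ≤
      Vfun (z + w) - Vfun w - ⟪(Real.sqrt (1 + ‖w‖ ^ 2))⁻¹ • w, z⟫ :=
  Vfun_shift_lower_bound_general z w
end
end

section
/- For each 1 < p < ∞ there exists a constant c = c(p) > 0 such that for all z, z' ∈ ℝ^{N×n}: (1/c)(1+|z|²+|z'|²)^{(p−2)/2}|z'|² ≤ V_p(z+z') − V_p(z) − ⟨V_p'(z), z'⟩ ≤ c(1+|z|²+|z'|²)^{(p−2)/2}|z'|², where V_p(z) = (1+|z|²)^{p/2} − 1. -/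
noncomputable section

open scoped RealInnerProductSpace

/-- `V_p(z) = (1+|z|²)^{p/2} − 1` on `ℝ^{N×n}` with the Hilbert–Schmidt inner product
(modelled as `EuclideanSpace ℝ (Fin N × Fin n)`). -/
def Vp {N n : ℕ} (p : ℝ) (z : EuclideanSpace ℝ (Fin N × Fin n)) : ℝ :=
  (1 + ‖z‖ ^ 2) ^ (p / 2) - 1

/-!
Put `k(t) = 1 + ‖z + t • w‖²` and `φ(t) = k(t) ^ (p / 2)`. The quantity to be estimated is the
Taylor remainder `φ 1 - φ 0 - φ' 0 = ∫₀¹ (1 - t) φ''(t) dt`, and by Cauchy–Schwarz `φ''(t)` lies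
between `p min(1, p - 1) ‖w‖² k(t) ^ q` and `p max(1, p - 1) ‖w‖² k(t) ^ q`, where `q = p / 2 - 1`.
It remains to show `∫₀¹ (1 - t) k(t) ^ q dt ≍ S ^ q` with `S = 1 + ‖z‖² + ‖w‖²`, for `q > -1/2`.
One direction comes from `k ≤ 2 S` on `[0, 1]`. For the other, if `t₀` minimises `k` on `[0, 1]`,
the triangle inequality gives `(t - t₀)² S ≤ 8 k(t)`: for `q ≥ 0` this bounds `k` below by `S / 512`
on a quarter-interval away from `t₀`, and for `q < 0` it reduces the claim to
`∫₀¹ |t - t₀| ^ (2q) dt ≤ 2 / (2q + 1)`, finite precisely because `2q > -1`.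
-/

open MeasureTheory Set

namespace intervalIntegral

theorem sub_sub_deriv_eq_integral_one_sub_mul {φ φ' φ'' : ℝ → ℝ}
    (hφ : ∀ t, HasDerivAt φ (φ' t) t) (hφ' : ∀ t, HasDerivAt φ' (φ'' t) t)
    (hφ'' : Continuous φ'') :
    φ 1 - φ 0 - φ' 0 = ∫ t in (0 : ℝ)..1, (1 - t) * φ'' t := by
  have hφ'_cont : Continuous φ' := continuous_iff_continuousAt.2 fun t => (hφ' t).continuousAt
  have hparts := integral_mul_deriv_eq_deriv_mul (a := 0) (b := 1)
    (fun t _ => (hasDerivAt_id t).const_sub 1) (fun t _ => hφ' t)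
    intervalIntegrable_const (hφ''.intervalIntegrable 0 1)
  have hftc := integral_eq_sub_of_hasDerivAt (fun t _ => hφ t) (hφ'_cont.intervalIntegrable 0 1)
  simp only [id_eq, neg_one_mul, integral_neg] at hparts
  rw [hparts, hftc]
  ring

theorem mul_le_integral_of_le_on_Icc {f : ℝ → ℝ} {a b m : ℝ} (hf : Continuous f)
    (hf₀ : ∀ t ∈ Icc (0 : ℝ) 1, 0 ≤ f t) (ha : 0 ≤ a) (hab : a ≤ b) (hb : b ≤ 1)
    (hm : ∀ t ∈ Icc a b, m ≤ f t) :
    (b - a) * m ≤ ∫ t in (0 : ℝ)..1, f t := calc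
  (b - a) * m = ∫ _ in a..b, m := by simp
  _ ≤ ∫ t in a..b, f t :=
    integral_mono_on hab intervalIntegrable_const (hf.intervalIntegrable a b) hm
  _ ≤ ∫ t in (0 : ℝ)..1, f t := by
    refine integral_mono_interval ha hab hb ?_ (hf.intervalIntegrable 0 1)
    exact (ae_restrict_iff' measurableSet_Ioc).2 <|
      .of_forall fun t ht => hf₀ t (Ioc_subset_Icc_self ht)

theorem integral_abs_sub_rpow_of_le {r a b : ℝ} (hr : -1 < r) (hab : a ≤ b) :
    ∫ t in a..b, |t - a| ^ r = (b - a) ^ (r + 1) / (r + 1) := by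
  have : ∫ t in a..b, |t - a| ^ r = ∫ t in a..b, (t - a) ^ r :=
    integral_congr fun t ht => by
      rw [uIcc_of_le hab] at ht
      rw [abs_of_nonneg (sub_nonneg.2 ht.1)]
  rw [this, integral_comp_sub_right (fun x => x ^ r), sub_self, integral_rpow (Or.inl hr),
    Real.zero_rpow (by linarith)]
  ring

theorem intervalIntegrable_abs_sub_rpow {r : ℝ} (hr : -1 < r) (a b c : ℝ) :
    IntervalIntegrable (fun t => |t - c| ^ r) volume a b := by
  have hpos : ∀ b, 0 ≤ b → IntervalIntegrable (fun x : ℝ => |x| ^ r) volume 0 b := fun b hb =>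
    (intervalIntegrable_rpow' hr).congr_uIoo fun x hx => by
      rw [uIoo_of_le hb] at hx
      simp [abs_of_pos hx.1]
  have hall : ∀ b, IntervalIntegrable (fun x : ℝ => |x| ^ r) volume 0 b := by
    intro b
    rcases le_total 0 b with hb | hb
    · exact hpos b hb
    · rw [IntervalIntegrable.iff_comp_neg]
      simpa using hpos (-b) (by linarith)
  simpa using ((hall (a - c)).symm.trans (hall (b - c))).comp_sub_right c

theorem integral_abs_sub_rpow {r c : ℝ} (hr : -1 < r) (hc₀ : 0 ≤ c) (hc₁ : c ≤ 1) :
    ∫ t in (0 : ℝ)..1, |t - c| ^ r = (c ^ (r + 1) + (1 - c) ^ (r + 1)) / (r + 1) := by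
  have hleft : ∫ t in (0 : ℝ)..c, |t - c| ^ r = c ^ (r + 1) / (r + 1) := by
    have := integral_comp_sub_left (fun x => |x - 0| ^ r) c (a := 0) (b := c)
    simp only [sub_zero, sub_self, abs_sub_comm c] at this
    rw [this]
    simpa using integral_abs_sub_rpow_of_le hr hc₀
  rw [← integral_add_adjacent_intervals (intervalIntegrable_abs_sub_rpow hr 0 c c)
    (intervalIntegrable_abs_sub_rpow hr c 1 c), hleft, integral_abs_sub_rpow_of_le hr hc₁]
  ring

end intervalIntegral

theorem one_add_norm_sq_rpow_half_sub_one {E : Type*} [NormedAddCommGroup E] (p : ℝ) (u : E) :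
    (1 + ‖u‖ ^ 2) ^ (p / 2 - 1) = (1 + ‖u‖ ^ 2) ^ (p / 2 - 2) * (1 + ‖u‖ ^ 2) := by
  rw [← Real.rpow_add_one (by positivity)]
  ring_nf

section NormedSpace

variable {E : Type*} [NormedAddCommGroup E] [NormedSpace ℝ E]

theorem norm_add_smul_sq_le (z w : E) {t : ℝ} (ht : t ∈ Icc (0 : ℝ) 1) :
    ‖z + t • w‖ ^ 2 ≤ 2 * (‖z‖ ^ 2 + ‖w‖ ^ 2) := by
  have h : ‖z + t • w‖ ≤ ‖z‖ + ‖w‖ := calc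
    ‖z + t • w‖ ≤ ‖z‖ + |t| * ‖w‖ := by grw [norm_add_le, norm_smul, Real.norm_eq_abs]
    _ ≤ ‖z‖ + ‖w‖ := by
      rw [abs_of_nonneg ht.1]
      nlinarith [ht.2, norm_nonneg w]
  nlinarith [norm_nonneg (z + t • w), sq_nonneg (‖z‖ - ‖w‖)]

theorem exists_sq_sub_mul_le_one_add_norm_add_smul_sq (z w : E) :
    ∃ t₀ ∈ Icc (0 : ℝ) 1, ∀ t ∈ Icc (0 : ℝ) 1,
      (t - t₀) ^ 2 * (1 + ‖z‖ ^ 2 + ‖w‖ ^ 2) ≤ 8 * (1 + ‖z + t • w‖ ^ 2) := by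
  obtain ⟨t₀, ht₀, hmin⟩ := isCompact_Icc.exists_isMinOn (nonempty_Icc.2 zero_le_one)
    (by fun_prop : Continuous fun t : ℝ => ‖z + t • w‖).continuousOn
  refine ⟨t₀, ht₀, fun t ht => ?_⟩
  have hmin' : ‖z + t₀ • w‖ ≤ ‖z + t • w‖ := hmin ht
  have hw : |t - t₀| * ‖w‖ ≤ 2 * ‖z + t • w‖ := calc
    |t - t₀| * ‖w‖ = ‖(z + t • w) - (z + t₀ • w)‖ := by
      rw [add_sub_add_left_eq_sub, ← sub_smul, norm_smul, Real.norm_eq_abs]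
    _ ≤ ‖z + t • w‖ + ‖z + t₀ • w‖ := norm_sub_le _ _
    _ ≤ 2 * ‖z + t • w‖ := by linarith
  have hz : |t - t₀| * ‖z‖ ≤ 2 * ‖z + t • w‖ := calc
    |t - t₀| * ‖z‖ = ‖t₀ • (z + t • w) - t • (z + t₀ • w)‖ := by
      rw [show t₀ • (z + t • w) - t • (z + t₀ • w) = (t₀ - t) • z by module, norm_smul,
        Real.norm_eq_abs, abs_sub_comm]
    _ ≤ t₀ * ‖z + t • w‖ + t * ‖z + t₀ • w‖ := by
      grw [norm_sub_le, norm_smul, norm_smul, Real.norm_eq_abs, Real.norm_eq_abs,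
        abs_of_nonneg ht₀.1, abs_of_nonneg ht.1]
    _ ≤ 2 * ‖z + t • w‖ := by nlinarith [ht.1, ht.2, ht₀.1, ht₀.2, norm_nonneg (z + t • w)]
  have hsq : (t - t₀) ^ 2 ≤ 1 := by nlinarith [ht.1, ht.2, ht₀.1, ht₀.2]
  have hw2 := pow_le_pow_left₀ (by positivity) hw 2
  have hz2 := pow_le_pow_left₀ (by positivity) hz 2
  rw [mul_pow, sq_abs] at hw2 hz2
  nlinarith

theorem continuous_one_add_norm_add_smul_sq_rpow (z w : E) (q : ℝ) :
    Continuous fun t : ℝ => (1 + ‖z + t • w‖ ^ 2) ^ q :=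
  (by fun_prop : Continuous fun t : ℝ => 1 + ‖z + t • w‖ ^ 2).rpow_const fun _ =>
    Or.inl (by positivity)

def weightedPowerIntegral (q : ℝ) (z w : E) : ℝ :=
  ∫ t in (0 : ℝ)..1, (1 - t) * (1 + ‖z + t • w‖ ^ 2) ^ q

section weightedPowerIntegral

open intervalIntegral

theorem continuous_weightedPowerIntegrand (z w : E) (q : ℝ) :
    Continuous fun t : ℝ => (1 - t) * (1 + ‖z + t • w‖ ^ 2) ^ q :=
  (continuous_const.sub continuous_id).mul (continuous_one_add_norm_add_smul_sq_rpow z w q)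

variable {q : ℝ}

theorem weightedPowerIntegral_le_of_nonneg (hq : 0 ≤ q) (z w : E) :
    weightedPowerIntegral q z w ≤ 2 ^ q * (1 + ‖z‖ ^ 2 + ‖w‖ ^ 2) ^ q := calc
  weightedPowerIntegral q z w ≤ ∫ _ in (0 : ℝ)..1, (2 * (1 + ‖z‖ ^ 2 + ‖w‖ ^ 2)) ^ q := by
    refine integral_mono_on zero_le_one
      ((continuous_weightedPowerIntegrand z w q).intervalIntegrable 0 1) intervalIntegrable_const
      fun t ht => ?_
    calc (1 - t) * (1 + ‖z + t • w‖ ^ 2) ^ q ≤ (1 + ‖z + t • w‖ ^ 2) ^ q :=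
          mul_le_of_le_one_left (by positivity) (by linarith [ht.1])
      _ ≤ (2 * (1 + ‖z‖ ^ 2 + ‖w‖ ^ 2)) ^ q := by
          gcongr
          linarith [norm_add_smul_sq_le z w ht]
  _ = 2 ^ q * (1 + ‖z‖ ^ 2 + ‖w‖ ^ 2) ^ q := by
    rw [intervalIntegral.integral_const, Real.mul_rpow zero_le_two (by positivity)]
    simp

theorem le_weightedPowerIntegral_of_nonpos (hq : q ≤ 0) (z w : E) :
    2 ^ q / 4 * (1 + ‖z‖ ^ 2 + ‖w‖ ^ 2) ^ q ≤ weightedPowerIntegral q z w := by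
  set S := 1 + ‖z‖ ^ 2 + ‖w‖ ^ 2
  have hpt : ∀ t ∈ Icc (0 : ℝ) (1 / 2), (2 * S) ^ q / 2 ≤ (1 - t) * (1 + ‖z + t • w‖ ^ 2) ^ q := by
    intro t ht
    have hk : (2 * S) ^ q ≤ (1 + ‖z + t • w‖ ^ 2) ^ q :=
      Real.rpow_le_rpow_of_nonpos (by positivity)
        (by linarith [norm_add_smul_sq_le z w ⟨ht.1, ht.2.trans (by norm_num)⟩]) hq
    nlinarith [ht.2, (by positivity : (0 : ℝ) ≤ (2 * S) ^ q)]
  calc 2 ^ q / 4 * S ^ q = (1 / 2 - 0) * ((2 * S) ^ q / 2) := by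
        rw [Real.mul_rpow zero_le_two (by positivity)]
        ring
    _ ≤ weightedPowerIntegral q z w :=
        mul_le_integral_of_le_on_Icc (continuous_weightedPowerIntegrand z w q)
          (fun t ht => mul_nonneg (by linarith [ht.2]) (by positivity)) le_rfl (by norm_num)
          (by norm_num) hpt

theorem le_weightedPowerIntegral_of_nonneg (hq : 0 ≤ q) (z w : E) :
    1 / (16 * 512 ^ q) * (1 + ‖z‖ ^ 2 + ‖w‖ ^ 2) ^ q ≤ weightedPowerIntegral q z w := by
  obtain ⟨t₀, -, hk⟩ := exists_sq_sub_mul_le_one_add_norm_add_smul_sq z w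
  set S := 1 + ‖z‖ ^ 2 + ‖w‖ ^ 2
  suffices key : ∀ a, 0 ≤ a → a ≤ 1 / 2 → (∀ t ∈ Icc a (a + 1 / 4), 1 / 64 ≤ (t - t₀) ^ 2) →
      1 / (16 * 512 ^ q) * S ^ q ≤ weightedPowerIntegral q z w by
    rcases le_or_gt (3 / 8) t₀ with h | h
    · exact key 0 le_rfl (by norm_num) fun t ht => by nlinarith [ht.2]
    · exact key (1 / 2) (by norm_num) le_rfl fun t ht => by nlinarith [ht.1]
  intro a ha₀ ha hfar
  have hpt : ∀ t ∈ Icc a (a + 1 / 4),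
      (S / 512) ^ q / 4 ≤ (1 - t) * (1 + ‖z + t • w‖ ^ 2) ^ q := by
    intro t ht
    have hkt : S / 512 ≤ 1 + ‖z + t • w‖ ^ 2 := by
      nlinarith [hk t ⟨ha₀.trans ht.1, by linarith [ht.2]⟩, hfar t ht]
    have hpow : (S / 512) ^ q ≤ (1 + ‖z + t • w‖ ^ 2) ^ q := by gcongr
    nlinarith [ht.2, (by positivity : (0 : ℝ) ≤ (S / 512) ^ q)]
  calc 1 / (16 * 512 ^ q) * S ^ q = (a + 1 / 4 - a) * ((S / 512) ^ q / 4) := by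
        rw [Real.div_rpow (by positivity) (by norm_num)]
        field_simp
        ring
    _ ≤ weightedPowerIntegral q z w :=
        mul_le_integral_of_le_on_Icc (continuous_weightedPowerIntegrand z w q)
          (fun t ht => mul_nonneg (by linarith [ht.2]) (by positivity)) ha₀ (by linarith)
          (by linarith) hpt

theorem weightedPowerIntegral_le_of_nonpos (hq₁ : -1 / 2 < q) (hq : q ≤ 0) (z w : E) :
    weightedPowerIntegral q z w ≤ 2 / ((2 * q + 1) * 8 ^ q) * (1 + ‖z‖ ^ 2 + ‖w‖ ^ 2) ^ q := by
  obtain ⟨t₀, ht₀, hk⟩ := exists_sq_sub_mul_le_one_add_norm_add_smul_sq z w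
  set S := 1 + ‖z‖ ^ 2 + ‖w‖ ^ 2
  have hS₀ : 0 < S := by positivity
  have hr : -1 < 2 * q := by linarith
  have hpt : ∀ t ∈ Icc (0 : ℝ) 1, t ≠ t₀ →
      (1 - t) * (1 + ‖z + t • w‖ ^ 2) ^ q ≤ (S / 8) ^ q * |t - t₀| ^ (2 * q) := by
    intro t ht hne
    have hpos : 0 < |t - t₀| ^ 2 * (S / 8) := by
      have := abs_pos.2 (sub_ne_zero.2 hne)
      positivity
    calc (1 - t) * (1 + ‖z + t • w‖ ^ 2) ^ q ≤ (1 + ‖z + t • w‖ ^ 2) ^ q :=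
          mul_le_of_le_one_left (by positivity) (by linarith [ht.1])
      _ ≤ (|t - t₀| ^ 2 * (S / 8)) ^ q :=
          Real.rpow_le_rpow_of_nonpos hpos (by nlinarith [hk t ht, sq_abs (t - t₀)]) hq
      _ = (S / 8) ^ q * |t - t₀| ^ (2 * q) := by
          rw [Real.mul_rpow (by positivity) (by positivity), mul_comm,
            Real.rpow_mul (abs_nonneg _), Real.rpow_two]
  have hint := (intervalIntegrable_abs_sub_rpow hr 0 1 t₀).const_mul ((S / 8) ^ q)
  calc weightedPowerIntegral q z w ≤ ∫ t in (0 : ℝ)..1, (S / 8) ^ q * |t - t₀| ^ (2 * q) := by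
        refine integral_mono_ae_restrict zero_le_one
          ((continuous_weightedPowerIntegrand z w q).intervalIntegrable 0 1) hint ?_
        rw [Filter.EventuallyLE, ae_restrict_iff' measurableSet_Icc]
        filter_upwards [Measure.ae_ne volume t₀] with t hne ht using hpt t ht hne
    _ = (S / 8) ^ q * ((t₀ ^ (2 * q + 1) + (1 - t₀) ^ (2 * q + 1)) / (2 * q + 1)) := by
        rw [intervalIntegral.integral_const_mul, integral_abs_sub_rpow hr ht₀.1 ht₀.2]
    _ ≤ (S / 8) ^ q * ((1 + 1) / (2 * q + 1)) := by
        have h₀ : t₀ ^ (2 * q + 1) ≤ 1 := Real.rpow_le_one ht₀.1 ht₀.2 (by linarith)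
        have h₁ : (1 - t₀) ^ (2 * q + 1) ≤ 1 :=
          Real.rpow_le_one (by linarith [ht₀.2]) (by linarith [ht₀.1]) (by linarith)
        gcongr (S / 8) ^ q * (?_ / _)
        all_goals linarith
    _ = 2 / ((2 * q + 1) * 8 ^ q) * S ^ q := by
        rw [Real.div_rpow hS₀.le (by norm_num)]
        field_simp
        ring

theorem exists_pos_le_weightedPowerIntegral (q : ℝ) :
    ∃ c > 0, ∀ z w : E, c * (1 + ‖z‖ ^ 2 + ‖w‖ ^ 2) ^ q ≤ weightedPowerIntegral q z w := by
  rcases le_total 0 q with hq | hq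
  · exact ⟨_, by positivity, le_weightedPowerIntegral_of_nonneg hq⟩
  · exact ⟨_, by positivity, le_weightedPowerIntegral_of_nonpos hq⟩

theorem exists_pos_weightedPowerIntegral_le (hq : -1 / 2 < q) :
    ∃ C > 0, ∀ z w : E, weightedPowerIntegral q z w ≤ C * (1 + ‖z‖ ^ 2 + ‖w‖ ^ 2) ^ q := by
  rcases le_total 0 q with hq₀ | hq₀
  · exact ⟨_, by positivity, weightedPowerIntegral_le_of_nonneg hq₀⟩
  · have : 0 < 2 * q + 1 := by linarith
    exact ⟨_, by positivity, weightedPowerIntegral_le_of_nonpos hq hq₀⟩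

end weightedPowerIntegral

end NormedSpace

section InnerProductSpace

variable {F : Type*} [NormedAddCommGroup F] [InnerProductSpace ℝ F]

theorem hasFDerivAt_one_add_norm_sq_rpow (s : ℝ) (x : F) :
    HasFDerivAt (fun x : F => (1 + ‖x‖ ^ 2) ^ s)
      ((2 * s * (1 + ‖x‖ ^ 2) ^ (s - 1)) • innerSL ℝ x) x := by
  have h := (Real.hasDerivAt_rpow_const (p := s) (Or.inl (by positivity : 1 + ‖x‖ ^ 2 ≠ 0)))
    |>.comp_hasFDerivAt x ((hasStrictFDerivAt_norm_sq x).hasFDerivAt.const_add 1)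
  refine h.congr_fderiv ?_
  ext y
  simp only [two_smul, smul_add, add_apply, smul_apply, coe_innerSL_apply, smul_eq_mul]
  ring

theorem hasDerivAt_one_add_norm_add_smul_sq_rpow (s : ℝ) (z w : F) (t : ℝ) :
    HasDerivAt (fun t : ℝ => (1 + ‖z + t • w‖ ^ 2) ^ s)
      (2 * s * (1 + ‖z + t • w‖ ^ 2) ^ (s - 1) * ⟪z + t • w, w⟫) t := by
  have hline : HasDerivAt (fun t : ℝ => z + t • w) w t := by
    simpa using ((hasDerivAt_id t).smul_const w).const_add z
  refine ((hasFDerivAt_one_add_norm_sq_rpow s (z + t • w)).comp_hasDerivAt t hline).congr_deriv ?_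
  simp only [FunLike.coe_smul, Pi.smul_apply, innerSL_apply_apply, smul_eq_mul]

/-- `hessianForm p u w` is `D²f(u)[w, w]` for `f x = (1 + ‖x‖²) ^ (p / 2)`. -/
def hessianForm (p : ℝ) (u w : F) : ℝ :=
  p * (1 + ‖u‖ ^ 2) ^ (p / 2 - 2) * ((p - 2) * ⟪u, w⟫ ^ 2 + (1 + ‖u‖ ^ 2) * ‖w‖ ^ 2)

theorem hasDerivAt_mul_one_add_norm_add_smul_sq_rpow_mul_inner (p : ℝ) (z w : F) (t : ℝ) :
    HasDerivAt (fun t : ℝ => p * (1 + ‖z + t • w‖ ^ 2) ^ (p / 2 - 1) * ⟪z + t • w, w⟫)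
      (hessianForm p (z + t • w) w) t := by
  have hinner : HasDerivAt (fun t : ℝ => ⟪z + t • w, w⟫) (‖w‖ ^ 2) t := by
    have := ((hasDerivAt_id t).smul_const w).const_add z |>.inner ℝ (hasDerivAt_const t w)
    simpa [real_inner_self_eq_norm_sq] using this
  refine (((hasDerivAt_one_add_norm_add_smul_sq_rpow (p / 2 - 1) z w t).const_mul p).mul
    hinner).congr_deriv ?_
  rw [hessianForm, one_add_norm_sq_rpow_half_sub_one, show p / 2 - 1 - 1 = p / 2 - 2 by ring]
  ring

theorem continuous_hessianForm_add_smul (p : ℝ) (z w : F) :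
    Continuous fun t : ℝ => hessianForm p (z + t • w) w := by
  unfold hessianForm
  have := continuous_one_add_norm_add_smul_sq_rpow z w (p / 2 - 2)
  fun_prop

theorem min_mul_le_sub_two_mul_add {p X Y : ℝ} (hX : 0 ≤ X) (hXY : X ≤ Y) :
    min 1 (p - 1) * Y ≤ (p - 2) * X + Y := by
  rcases le_total 2 p with hp | hp
  · nlinarith [min_le_left 1 (p - 1)]
  · nlinarith [min_le_right 1 (p - 1)]

theorem sub_two_mul_add_le_max_mul {p X Y : ℝ} (hX : 0 ≤ X) (hXY : X ≤ Y) :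
    (p - 2) * X + Y ≤ max 1 (p - 1) * Y := by
  rcases le_total 2 p with hp | hp
  · nlinarith [le_max_right 1 (p - 1)]
  · nlinarith [le_max_left 1 (p - 1)]

theorem inner_sq_le_one_add_norm_sq_mul (u w : F) : ⟪u, w⟫ ^ 2 ≤ (1 + ‖u‖ ^ 2) * ‖w‖ ^ 2 := by
  have := abs_real_inner_le_norm u w
  have := abs_nonneg ⟪u, w⟫
  nlinarith [sq_abs ⟪u, w⟫, norm_nonneg u, norm_nonneg w]

theorem le_hessianForm {p : ℝ} (hp : 0 ≤ p) (u w : F) :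
    p * min 1 (p - 1) * ‖w‖ ^ 2 * (1 + ‖u‖ ^ 2) ^ (p / 2 - 1) ≤ hessianForm p u w := by
  have h := min_mul_le_sub_two_mul_add (p := p) (sq_nonneg _) (inner_sq_le_one_add_norm_sq_mul u w)
  rw [hessianForm, one_add_norm_sq_rpow_half_sub_one]
  have : 0 ≤ p * (1 + ‖u‖ ^ 2) ^ (p / 2 - 2) := by positivity
  nlinarith [mul_le_mul_of_nonneg_left h this]

theorem hessianForm_le {p : ℝ} (hp : 0 ≤ p) (u w : F) :
    hessianForm p u w ≤ p * max 1 (p - 1) * ‖w‖ ^ 2 * (1 + ‖u‖ ^ 2) ^ (p / 2 - 1) := by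
  have h := sub_two_mul_add_le_max_mul (p := p) (sq_nonneg _) (inner_sq_le_one_add_norm_sq_mul u w)
  rw [hessianForm, one_add_norm_sq_rpow_half_sub_one]
  have : 0 ≤ p * (1 + ‖u‖ ^ 2) ^ (p / 2 - 2) := by positivity
  nlinarith [mul_le_mul_of_nonneg_left h this]

theorem one_add_norm_sq_rpow_taylor (p : ℝ) (z w : F) :
    (1 + ‖z + w‖ ^ 2) ^ (p / 2) - (1 + ‖z‖ ^ 2) ^ (p / 2) -
        p * (1 + ‖z‖ ^ 2) ^ (p / 2 - 1) * ⟪z, w⟫ =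
      ∫ t in (0 : ℝ)..1, (1 - t) * hessianForm p (z + t • w) w := by
  have h := intervalIntegral.sub_sub_deriv_eq_integral_one_sub_mul
    (φ := fun t => (1 + ‖z + t • w‖ ^ 2) ^ (p / 2))
    (fun t => (hasDerivAt_one_add_norm_add_smul_sq_rpow (p / 2) z w t).congr_deriv (by ring))
    (hasDerivAt_mul_one_add_norm_add_smul_sq_rpow_mul_inner p z w)
    (continuous_hessianForm_add_smul p z w)
  simpa using h

theorem mul_weightedPowerIntegral_le_remainder {p : ℝ} (hp : 0 ≤ p) (z w : F) :
    p * min 1 (p - 1) * ‖w‖ ^ 2 * weightedPowerIntegral (p / 2 - 1) z w ≤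
      (1 + ‖z + w‖ ^ 2) ^ (p / 2) - (1 + ‖z‖ ^ 2) ^ (p / 2) -
        p * (1 + ‖z‖ ^ 2) ^ (p / 2 - 1) * ⟪z, w⟫ := by
  rw [one_add_norm_sq_rpow_taylor, weightedPowerIntegral, ← intervalIntegral.integral_const_mul]
  refine intervalIntegral.integral_mono_on zero_le_one
    (((continuous_weightedPowerIntegrand z w _).const_mul _).intervalIntegrable 0 1)
    (((continuous_const.sub continuous_id).mul
      (continuous_hessianForm_add_smul p z w)).intervalIntegrable 0 1) fun t ht => ?_
  rw [mul_left_comm]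
  exact mul_le_mul_of_nonneg_left (le_hessianForm hp _ w) (by linarith [ht.2])

theorem remainder_le_mul_weightedPowerIntegral {p : ℝ} (hp : 0 ≤ p) (z w : F) :
    (1 + ‖z + w‖ ^ 2) ^ (p / 2) - (1 + ‖z‖ ^ 2) ^ (p / 2) -
        p * (1 + ‖z‖ ^ 2) ^ (p / 2 - 1) * ⟪z, w⟫ ≤
      p * max 1 (p - 1) * ‖w‖ ^ 2 * weightedPowerIntegral (p / 2 - 1) z w := by
  rw [one_add_norm_sq_rpow_taylor, weightedPowerIntegral, ← intervalIntegral.integral_const_mul]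
  refine intervalIntegral.integral_mono_on zero_le_one
    (((continuous_const.sub continuous_id).mul
      (continuous_hessianForm_add_smul p z w)).intervalIntegrable 0 1)
    (((continuous_weightedPowerIntegrand z w _).const_mul _).intervalIntegrable 0 1) fun t ht => ?_
  rw [mul_left_comm _ (1 - t)]
  exact mul_le_mul_of_nonneg_left (hessianForm_le hp _ w) (by linarith [ht.2])

theorem exists_pos_bounds_one_add_norm_sq_rpow_remainder {p : ℝ} (hp : 1 < p) :
    ∃ m > 0, ∃ M > 0, ∀ z w : F,
      m * (1 + ‖z‖ ^ 2 + ‖w‖ ^ 2) ^ (p / 2 - 1) * ‖w‖ ^ 2 ≤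
          (1 + ‖z + w‖ ^ 2) ^ (p / 2) - (1 + ‖z‖ ^ 2) ^ (p / 2) -
            p * (1 + ‖z‖ ^ 2) ^ (p / 2 - 1) * ⟪z, w⟫ ∧
        (1 + ‖z + w‖ ^ 2) ^ (p / 2) - (1 + ‖z‖ ^ 2) ^ (p / 2) -
            p * (1 + ‖z‖ ^ 2) ^ (p / 2 - 1) * ⟪z, w⟫ ≤
          M * (1 + ‖z‖ ^ 2 + ‖w‖ ^ 2) ^ (p / 2 - 1) * ‖w‖ ^ 2 := by
  obtain ⟨c, hc, hJc⟩ := exists_pos_le_weightedPowerIntegral (E := F) (p / 2 - 1)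
  obtain ⟨C, hC, hJC⟩ := exists_pos_weightedPowerIntegral_le (E := F) (q := p / 2 - 1) (by linarith)
  have hmin : 0 < min 1 (p - 1) := lt_min one_pos (by linarith)
  have hmax : 0 < max 1 (p - 1) := lt_max_of_lt_left one_pos
  refine ⟨p * min 1 (p - 1) * c, by positivity, p * max 1 (p - 1) * C, by positivity,
    fun z w => ⟨?_, ?_⟩⟩
  · refine le_trans ?_ (mul_weightedPowerIntegral_le_remainder (by linarith) z w)
    have := mul_le_mul_of_nonneg_left (hJc z w) (by positivity : 0 ≤ p * min 1 (p - 1) * ‖w‖ ^ 2)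
    linarith
  · refine (remainder_le_mul_weightedPowerIntegral (by linarith) z w).trans ?_
    have := mul_le_mul_of_nonneg_left (hJC z w) (by positivity : 0 ≤ p * max 1 (p - 1) * ‖w‖ ^ 2)
    linarith

end InnerProductSpace

theorem gradient_Vp {N n : ℕ} (p : ℝ) (z : EuclideanSpace ℝ (Fin N × Fin n)) :
    gradient (Vp p) z = (p * (1 + ‖z‖ ^ 2) ^ (p / 2 - 1)) • z := by
  refine HasGradientAt.gradient <| hasGradientAt_iff_hasFDerivAt.2 <|
    ((hasFDerivAt_one_add_norm_sq_rpow (p / 2) z).sub_const 1).congr_fderiv ?_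
  ext y
  simp only [smul_apply, coe_innerSL_apply, smul_eq_mul, map_smul,
    InnerProductSpace.toDual_apply_apply]
  ring

/-- For each `1 < p < ∞` there is `c = c(p) > 0` such that for all `z, z' ∈ ℝ^{N×n}`:
`(1/c)(1+|z|²+|z'|²)^{(p−2)/2}|z'|² ≤ V_p(z+z') − V_p(z) − ⟨V_p'(z), z'⟩
  ≤ c(1+|z|²+|z'|²)^{(p−2)/2}|z'|²`, where `V_p'` is the gradient of `V_p`. -/
theorem Vp_taylor_two_sided (N n : ℕ) (p : ℝ) (hp : 1 < p) :
    ∃ c : ℝ, 0 < c ∧ ∀ z z' : EuclideanSpace ℝ (Fin N × Fin n),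
      (1 / c) * (1 + ‖z‖ ^ 2 + ‖z'‖ ^ 2) ^ ((p - 2) / 2) * ‖z'‖ ^ 2 ≤
          Vp p (z + z') - Vp p z - ⟪gradient (Vp p) z, z'⟫ ∧
        Vp p (z + z') - Vp p z - ⟪gradient (Vp p) z, z'⟫ ≤
          c * (1 + ‖z‖ ^ 2 + ‖z'‖ ^ 2) ^ ((p - 2) / 2) * ‖z'‖ ^ 2 := by
  obtain ⟨m, hm, M, hM, hbounds⟩ :=
    exists_pos_bounds_one_add_norm_sq_rpow_remainder (F := EuclideanSpace ℝ (Fin N × Fin n)) hp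
  have hc : 0 < max M (1 / m) := lt_max_of_lt_left hM
  refine ⟨max M (1 / m), hc, fun z z' => ?_⟩
  have hR : Vp p (z + z') - Vp p z - ⟪gradient (Vp p) z, z'⟫ =
      (1 + ‖z + z'‖ ^ 2) ^ (p / 2) - (1 + ‖z‖ ^ 2) ^ (p / 2) -
        p * (1 + ‖z‖ ^ 2) ^ (p / 2 - 1) * ⟪z, z'⟫ := by
    rw [gradient_Vp, real_inner_smul_left, Vp, Vp]
    ring
  rw [hR, show (p - 2) / 2 = p / 2 - 1 by ring]
  obtain ⟨hlower, hupper⟩ := hbounds z z'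
  have hX : 0 ≤ (1 + ‖z‖ ^ 2 + ‖z'‖ ^ 2) ^ (p / 2 - 1) * ‖z'‖ ^ 2 := by positivity
  refine ⟨le_trans ?_ hlower, hupper.trans ?_⟩
  · have h : 1 / max M (1 / m) ≤ m := (one_div_le hc hm).2 (le_max_right _ _)
    simpa only [mul_assoc] using mul_le_mul_of_nonneg_right h hX
  · simpa only [mul_assoc] using mul_le_mul_of_nonneg_right (le_max_left M (1 / m)) hX
end
end

section
/- Let 0 < r < s < ∞, θ ∈ [0, 1/8), and let f : [r,s] → ℝ be non-decreasing and right-continuous. Then for any measurable set E ⊂ [r,s] with L¹(E) < θ(s−r) there exist r < r̃ < s̃ < s with r̃, s̃ ∉ E such that: (i) (f(a) − f(τ))/(a − τ) ≤ (800/(1−8θ))·(f(s)−f(r))/(s−r) for all τ < a, and (f(τ) − f(a))/(τ − a) ≤ (800/(1−8θ))·(f(s)−f(r))/(s−r) for all τ > a, for a ∈ {r̃, s̃} (where τ ranges over (r,s)); and (ii) (s̃ − r̃) ≤ (s − r) ≤ 8(s̃ − r̃). -/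
/-!
Extend `f` by constants to a Stieltjes function `F`, whose measure has total mass `f s - f r`.
A point of `[r, s]` at which some difference quotient exceeds `λ` is the centre of a closed ball
of radius `ρ ≤ s - r` and `dF`-measure at least `λ ρ`; by the Vitali covering lemma these points
form a set of Lebesgue measure at most `8 (f s - f r) / λ`. For
`λ = 800/(1-8θ) · (f s - f r)/(s - r)` this is `(1-8θ)(s-r)/100`, so together with `E` the bad
points have measure `< (s - r)/4`, and good points `r̃, s̃` can be picked in the first and last
quarters of `(r, s)`.
-/

open MeasureTheory Set Metric Filter Topology

theorem volume_le_of_forall_exists_le_measure_closedBall (μ : Measure ℝ) {B : Set ℝ}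
    {lam R : ℝ} (hlam : 0 < lam)
    (h : ∀ a ∈ B, ∃ ρ, 0 < ρ ∧ ρ ≤ R ∧ ENNReal.ofReal (lam * ρ) ≤ μ (closedBall a ρ)) :
    volume B ≤ ENNReal.ofReal (8 / lam) * μ univ := by
  choose! ρ hρ_pos hρ_le hρ_measure using h
  obtain ⟨u, huB, hu_disj, hu_cover⟩ :=
    Vitali.exists_disjoint_subfamily_covering_enlargement_closedBall B id ρ R hρ_le 4
      (by norm_num)
  simp only [id_eq] at hu_disj hu_cover
  have hu_count : u.Countable := hu_disj.countable_of_nonempty_interior fun a ha => by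
    rw [Real.closedBall_eq_Icc, interior_Icc]
    exact nonempty_Ioo.2 (by linarith [hρ_pos a (huB ha)])
  have hB_cover : B ⊆ ⋃ b ∈ u, closedBall b (4 * ρ b) := fun a ha => by
    obtain ⟨b, hbu, hsub⟩ := hu_cover a ha
    exact mem_biUnion hbu (hsub (mem_closedBall_self (hρ_pos a ha).le))
  calc volume B ≤ ∑' b : u, volume (closedBall (b : ℝ) (4 * ρ b)) :=
        (measure_mono hB_cover).trans (measure_biUnion_le volume hu_count _)
    _ = ∑' b : u, ENNReal.ofReal (8 / lam) * ENNReal.ofReal (lam * ρ b) := by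
        refine tsum_congr fun b => ?_
        rw [Real.volume_closedBall, ← ENNReal.ofReal_mul (by positivity)]
        congr 1
        field_simp
        ring
    _ ≤ ∑' b : u, ENNReal.ofReal (8 / lam) * μ (closedBall (b : ℝ) (ρ b)) :=
        ENNReal.tsum_le_tsum fun b => mul_le_mul_right (hρ_measure _ (huB b.2)) _
    _ = ENNReal.ofReal (8 / lam) * μ (⋃ b ∈ u, closedBall b (ρ b)) := by
        rw [ENNReal.tsum_mul_left,
          measure_biUnion hu_count hu_disj fun b _ => measurableSet_closedBall]
    _ ≤ ENNReal.ofReal (8 / lam) * μ univ := by gcongr; exact subset_univ _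

theorem exists_mem_Ioo_notMem_of_volume_lt {D : Set ℝ} {a b : ℝ}
    (hD : volume D < .ofReal (b - a)) :
    ∃ x ∈ Ioo a b, x ∉ D :=
  not_subset.1 fun hsub => (measure_mono hsub).not_gt (by rwa [Real.volume_Ioo])

namespace StieltjesFunction

theorem ofReal_mul_abs_le_measure_closedBall_of_lt_slope (F : StieltjesFunction ℝ)
    {a τ lam : ℝ} (hτa : τ ≠ a) (hlam : lam < slope F τ a) :
    ENNReal.ofReal (lam * |a - τ|) ≤ F.measure (closedBall a |a - τ|) := by
  rw [Real.closedBall_eq_Icc]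
  rcases hτa.lt_or_gt with hlt | hgt
  · rw [slope_def_field, lt_div_iff₀ (sub_pos.2 hlt)] at hlam
    rw [abs_of_pos (sub_pos.2 hlt)]
    calc ENNReal.ofReal (lam * (a - τ)) ≤ F.measure (Ioc τ a) := by
          rw [measure_Ioc]; exact ENNReal.ofReal_le_ofReal hlam.le
      _ ≤ _ := measure_mono fun x hx => mem_Icc.2 ⟨by linarith [hx.1], by linarith [hx.2]⟩
  · rw [slope_comm, slope_def_field, lt_div_iff₀ (sub_pos.2 hgt)] at hlam
    rw [abs_of_neg (sub_neg.2 hgt), neg_sub]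
    calc ENNReal.ofReal (lam * (τ - a)) ≤ F.measure (Ioc a τ) := by
          rw [measure_Ioc]; exact ENNReal.ofReal_le_ofReal hlam.le
      _ ≤ _ := measure_mono fun x hx => mem_Icc.2 ⟨by linarith [hx.1], by linarith [hx.2]⟩

/-- The weak-type `(1,1)` inequality for the Hardy–Littlewood maximal function of `dF`. -/
theorem volume_setOf_lt_slope_le (F : StieltjesFunction ℝ) {lam : ℝ} (hlam : 0 < lam)
    (R : ℝ) :
    volume {a | ∃ τ, τ ≠ a ∧ |a - τ| ≤ R ∧ lam < slope F τ a} ≤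
      ENNReal.ofReal (8 / lam) * F.measure univ := by
  refine volume_le_of_forall_exists_le_measure_closedBall F.measure (R := R) hlam ?_
  rintro a ⟨τ, hτa, hR, hslope⟩
  exact ⟨|a - τ|, abs_pos.2 (sub_ne_zero.2 hτa.symm), hR,
    F.ofReal_mul_abs_le_measure_closedBall_of_lt_slope hτa hslope⟩

noncomputable def IccExtend {a b : ℝ} (hab : a < b) (f : ℝ → ℝ)
    (hmono : MonotoneOn f (Icc a b)) (hrc : ∀ t ∈ Ico a b, ContinuousWithinAt f (Ici t) t) :
    StieltjesFunction ℝ where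
  toFun t := f (projIcc a b hab.le t)
  mono' _ _ hxy :=
    hmono (projIcc a b hab.le _).2 (projIcc a b hab.le _).2 (monotone_projIcc hab.le hxy)
  right_continuous' x := by
    rcases lt_or_ge x b with hxb | hbx
    · have hx : (projIcc a b hab.le x : ℝ) ∈ Ico a b :=
        ⟨(projIcc a b hab.le x).2.1, max_lt hab (min_lt_of_right_lt hxb)⟩
      exact ContinuousWithinAt.comp (f := fun t => (projIcc a b hab.le t : ℝ)) (hrc _ hx)
        (continuous_subtype_val.comp continuous_projIcc).continuousWithinAt
        fun y hy => Subtype.coe_le_coe.2 (monotone_projIcc hab.le hy)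
    · have hconst : ∀ y ∈ Ici x, f (projIcc a b hab.le y) = f b := fun y hy => by
        rw [projIcc_of_right_le hab.le (hbx.trans hy)]
      exact continuousWithinAt_const.congr hconst (hconst x self_mem_Ici)

variable {f : ℝ → ℝ} {a b : ℝ} (hab : a < b) (hmono : MonotoneOn f (Icc a b))
    (hrc : ∀ t ∈ Ico a b, ContinuousWithinAt f (Ici t) t)

theorem IccExtend_apply_of_mem {t : ℝ} (ht : t ∈ Icc a b) : IccExtend hab f hmono hrc t = f t :=
  congrArg f (congrArg Subtype.val (projIcc_of_mem hab.le ht))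

theorem measure_univ_IccExtend :
    (IccExtend hab f hmono hrc).measure univ = ENNReal.ofReal (f b - f a) := by
  refine measure_univ _ (tendsto_const_nhds.congr' ?_) (tendsto_const_nhds.congr' ?_)
  · filter_upwards [eventually_le_atBot a] with t ht
    exact congrArg f (congrArg Subtype.val (projIcc_of_le_left hab.le ht)).symm
  · filter_upwards [eventually_ge_atTop b] with t ht
    exact congrArg f (congrArg Subtype.val (projIcc_of_right_le hab.le ht)).symm

end StieltjesFunction

theorem volume_setOf_lt_mul_slope_le {f : ℝ → ℝ} {a b C : ℝ} (hab : a < b)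
    (hmono : MonotoneOn f (Icc a b)) (hrc : ∀ t ∈ Ico a b, ContinuousWithinAt f (Ici t) t)
    (hC : 0 < C) :
    volume {x ∈ Icc a b | ∃ τ ∈ Icc a b, τ ≠ x ∧ C * slope f a b < slope f τ x} ≤
      ENNReal.ofReal (8 / C * (b - a)) := by
  have ha : a ∈ Icc a b := left_mem_Icc.2 hab.le
  have hb : b ∈ Icc a b := right_mem_Icc.2 hab.le
  rcases (hmono ha hb hab.le).eq_or_lt with hfab | hfab
  · have hconst : ∀ x ∈ Icc a b, f x = f a := fun x hx =>
      le_antisymm (hfab ▸ hmono hx hb hx.2) (hmono ha hx hx.1)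
    have hempty : {x ∈ Icc a b | ∃ τ ∈ Icc a b, τ ≠ x ∧ C * slope f a b < slope f τ x} = ∅ :=
      eq_empty_of_forall_notMem fun x ⟨hx, τ, hτ, _, hlt⟩ => by
        simp [slope_def_field, hconst x hx, hconst τ hτ, hconst b hb] at hlt
    rw [hempty, measure_empty]
    positivity
  set F := StieltjesFunction.IccExtend hab f hmono hrc
  have hF : ∀ x ∈ Icc a b, F x = f x := fun x hx =>
    StieltjesFunction.IccExtend_apply_of_mem hab hmono hrc hx
  have hslope : 0 < C * slope f a b := by
    rw [slope_def_field]
    exact mul_pos hC (div_pos (sub_pos.2 hfab) (sub_pos.2 hab))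
  calc _ ≤ volume {x | ∃ τ, τ ≠ x ∧ |x - τ| ≤ b - a ∧ C * slope f a b < slope F τ x} := by
        refine measure_mono fun x ⟨hx, τ, hτ, hτx, hlt⟩ => ⟨τ, hτx, ?_, ?_⟩
        · exact abs_sub_le_iff.2 ⟨by linarith [hx.2, hτ.1], by linarith [hx.1, hτ.2]⟩
        · rwa [slope_def_field F, hF x hx, hF τ hτ, ← slope_def_field f]
    _ ≤ ENNReal.ofReal (8 / (C * slope f a b)) * F.measure univ :=
        F.volume_setOf_lt_slope_le hslope _
    _ = ENNReal.ofReal (8 / C * (b - a)) := by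
        rw [StieltjesFunction.measure_univ_IccExtend, ← ENNReal.ofReal_mul (by positivity),
          slope_def_field]
        congr 1
        field_simp

theorem hardy_littlewood_selection_general
    {r s θ : ℝ} (hrs : r < s) (hθ : θ ∈ Set.Ico (0 : ℝ) (1 / 8))
    (f : ℝ → ℝ) (hf_mono : MonotoneOn f (Set.Icc r s))
    (hf_rc : ∀ t ∈ Set.Ico r s, ContinuousWithinAt f (Set.Ici t) t)
    (E : Set ℝ)
    (hE_small : volume E < ENNReal.ofReal (θ * (s - r))) :
    ∃ r' s' : ℝ, r < r' ∧ r' < s' ∧ s' < s ∧ r' ∉ E ∧ s' ∉ E ∧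
      (∀ a ∈ ({r', s'} : Set ℝ),
        (∀ τ ∈ Set.Ioo r s, τ < a →
          (f a - f τ) / (a - τ) ≤ 800 / (1 - 8 * θ) * ((f s - f r) / (s - r))) ∧
        (∀ τ ∈ Set.Ioo r s, a < τ →
          (f τ - f a) / (τ - a) ≤ 800 / (1 - 8 * θ) * ((f s - f r) / (s - r)))) ∧
      s' - r' ≤ s - r ∧ s - r ≤ 8 * (s' - r') := by
  obtain ⟨hθ0, hθ8⟩ := hθ
  have h8θ : 0 < 1 - 8 * θ := by linarith
  set C := 800 / (1 - 8 * θ) with hC_def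
  set B := {x ∈ Icc r s | ∃ τ ∈ Icc r s, τ ≠ x ∧ C * slope f r s < slope f τ x}
  have hB : volume B ≤ ENNReal.ofReal ((1 - 8 * θ) * (s - r) / 100) :=
    (volume_setOf_lt_mul_slope_le hrs hf_mono hf_rc (by positivity)).trans_eq <| by
      rw [hC_def]; congr 1; field_simp; ring
  have hEB : volume (E ∪ B) < ENNReal.ofReal ((s - r) / 4) := calc
    volume (E ∪ B) ≤ volume E + volume B := measure_union_le E B
    _ < ENNReal.ofReal (θ * (s - r)) + ENNReal.ofReal ((1 - 8 * θ) * (s - r) / 100) :=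
        ENNReal.add_lt_add_of_lt_of_le (hB.trans_lt ENNReal.ofReal_lt_top).ne hE_small hB
    _ ≤ ENNReal.ofReal ((s - r) / 4) := by
        rw [← ENNReal.ofReal_add (by nlinarith) (by nlinarith)]
        exact ENNReal.ofReal_le_ofReal (by nlinarith)
  obtain ⟨r', hr', hr'EB⟩ :=
    exists_mem_Ioo_notMem_of_volume_lt (a := r) (b := r + (s - r) / 4)
      (by rwa [add_sub_cancel_left])
  obtain ⟨s', hs', hs'EB⟩ :=
    exists_mem_Ioo_notMem_of_volume_lt (a := s - (s - r) / 4) (b := s)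
      (by rwa [sub_sub_cancel])
  have hgood : ∀ x ∈ Ioo r s, x ∉ B → ∀ τ ∈ Ioo r s, τ ≠ x → slope f τ x ≤ C * slope f r s :=
    fun x hx hxB τ hτ hτx => not_lt.1 fun hlt =>
      hxB ⟨Ioo_subset_Icc_self hx, τ, Ioo_subset_Icc_self hτ, hτx, hlt⟩
  refine ⟨r', s', hr'.1, by linarith [hr'.2, hs'.1], hs'.2, fun h => hr'EB (.inl h),
    fun h => hs'EB (.inl h), ?_, by linarith [hr'.1, hs'.2], by linarith [hr'.2, hs'.1]⟩
  have hmem : ∀ a ∈ ({r', s'} : Set ℝ), a ∈ Ioo r s ∧ a ∉ B := by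
    rintro a (rfl | rfl)
    exacts [⟨⟨hr'.1, by linarith [hr'.2]⟩, fun h => hr'EB (.inr h)⟩,
      ⟨⟨by linarith [hs'.1], hs'.2⟩, fun h => hs'EB (.inr h)⟩]
  intro a ha
  simp only [← slope_def_field]
  refine ⟨fun τ hτ hτa => hgood a (hmem a ha).1 (hmem a ha).2 τ hτ hτa.ne, fun τ hτ haτ => ?_⟩
  rw [slope_comm]
  exact hgood a (hmem a ha).1 (hmem a ha).2 τ hτ haτ.ne'

/-- Hardy–Littlewood-type selection lemma (Lemma 2.7): for a non-decreasing
right-continuous `f : [r,s] → ℝ`, `θ ∈ [0,1/8)` and a measurable `E ⊆ [r,s]` with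
`L¹(E) < θ(s−r)`, there are `r < r̃ < s̃ < s` with `r̃, s̃ ∉ E` such that both `r̃` and `s̃`
satisfy the two-sided difference-quotient bounds with constant `800/(1−8θ)`, and
`s̃ − r̃ ≤ s − r ≤ 8(s̃ − r̃)`. -/
theorem hardy_littlewood_selection
    {r s θ : ℝ} (hr : 0 < r) (hrs : r < s) (hθ : θ ∈ Set.Ico (0 : ℝ) (1 / 8))
    (f : ℝ → ℝ) (hf_mono : MonotoneOn f (Set.Icc r s))
    (hf_rc : ∀ t ∈ Set.Ico r s, ContinuousWithinAt f (Set.Ici t) t)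
    (E : Set ℝ) (hE_meas : MeasurableSet E) (hE_sub : E ⊆ Set.Icc r s)
    (hE_small : volume E < ENNReal.ofReal (θ * (s - r))) :
    ∃ r' s' : ℝ, r < r' ∧ r' < s' ∧ s' < s ∧ r' ∉ E ∧ s' ∉ E ∧
      (∀ a ∈ ({r', s'} : Set ℝ),
        (∀ τ ∈ Set.Ioo r s, τ < a →
          (f a - f τ) / (a - τ) ≤ 800 / (1 - 8 * θ) * ((f s - f r) / (s - r))) ∧
        (∀ τ ∈ Set.Ioo r s, a < τ →
          (f τ - f a) / (τ - a) ≤ 800 / (1 - 8 * θ) * ((f s - f r) / (s - r)))) ∧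
      s' - r' ≤ s - r ∧ s - r ≤ 8 * (s' - r') :=
  hardy_littlewood_selection_general hrs hθ f hf_mono hf_rc E hE_small
end

section
/- Let 1 ≤ q < ∞ and define F_q : ℝ → ℝ by F_q(t) = (1/q)(t+1)^q − 1/q for t ≥ 0 and F_q(t) = t for t < 0. Then F_q is convex, satisfies t − c ≤ F_q(t) ≤ c(1+|t|^q) for some c > 0, and with Ω = (0,1) and v_j(x) := max{−jx+1, 0}, the sequence (v_j) ⊂ W^{1,q}(0,1) converges weakly-* in BV(0,1) to u ≡ 0 while liminf_{j→∞} ∫₀¹ F_q(v_j') dx = −1 < 0 = ∫₀¹ F_q(u') dx. Hence the functional v ↦ ∫₀¹ F_q(v') dx is not sequentially weak*-lower semicontinuous on BV(0,1). -/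
noncomputable section

open MeasureTheory

/-- The convex `(1,q)`-growth integrand
`F_q(t) = (1/q)(t+1)^q − 1/q` for `t ≥ 0` and `F_q(t) = t` for `t < 0`. -/
def Fq (q : ℝ) (t : ℝ) : ℝ :=
  if 0 ≤ t then (1 / q) * (t + 1) ^ q - 1 / q else t

/-- The sequence `v_j(x) = max{−jx+1, 0}` on `(0,1)`. -/
def vseq (j : ℕ) (x : ℝ) : ℝ := max (1 - (j : ℝ) * x) 0

/-- The (a.e.) derivative of `v_j`: `−j` on `(0,1/j)` and `0` on `(1/j,1)`. -/
def vderiv (j : ℕ) (x : ℝ) : ℝ := if x < 1 / (j : ℝ) then -(j : ℝ) else 0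

/-!
The derivatives `v_j' = -j·1_{(0,1/j)}` have total mass `1` concentrating at the endpoint `0`,
so tested against functions compactly supported in `(0,1)` they tend to `0`, as do the `v_j`
in `L¹`. But `F_q` is the identity on `(-∞, 0]`, where the `v_j'` take their values, so
`∫₀¹ F_q(v_j') = ∫₀¹ v_j' = v_j(1) - v_j(0) = -1`: the mass lost at the boundary is invisible
to the weak-* limit `u = 0`, whose energy is `F_q(0) = 0`.
-/

open Set Filter Topology

section Integrand

variable {q t : ℝ}

theorem Fq_of_nonneg (q : ℝ) (ht : 0 ≤ t) : Fq q t = 1 / q * (t + 1) ^ q - 1 / q := if_pos ht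

theorem Fq_of_nonpos (q : ℝ) (ht : t ≤ 0) : Fq q t = t := by
  rcases ht.lt_or_eq with ht | rfl
  · exact if_neg ht.not_ge
  · simp [Fq]

theorem Fq_zero (q : ℝ) : Fq q 0 = 0 := Fq_of_nonpos q le_rfl

theorem hasDerivAt_Fq (hq : 1 ≤ q) (t : ℝ) :
    HasDerivAt (Fq q) ((max t 0 + 1) ^ (q - 1)) t := by
  have hpow : ∀ s, HasDerivAt (fun x => 1 / q * (x + 1) ^ q - 1 / q) ((s + 1) ^ (q - 1)) s := by
    intro s
    have h := ((((hasDerivAt_id' s).add_const 1).rpow_const (Or.inr hq)).const_mul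
      (1 / q)).sub_const (1 / q)
    rwa [one_mul, ← mul_assoc, one_div_mul_cancel (zero_lt_one.trans_le hq).ne', one_mul] at h
  rcases lt_trichotomy t 0 with ht | rfl | ht
  · rw [max_eq_right ht.le, zero_add, Real.one_rpow]
    exact (hasDerivAt_id t).congr_of_eventuallyEq <|
      (eventually_lt_nhds ht).mono fun x hx => Fq_of_nonpos q hx.le
  · have hright : HasDerivWithinAt (Fq q) 1 (Ici 0) 0 := by
      simpa using ((hpow 0).hasDerivWithinAt (s := Ici 0)).congr (fun x hx => Fq_of_nonneg q hx)
        (Fq_of_nonneg q le_rfl)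
    have hleft : HasDerivWithinAt (Fq q) 1 (Iic 0) 0 :=
      (hasDerivAt_id 0).hasDerivWithinAt.congr (fun x hx => Fq_of_nonpos q hx) (Fq_zero q)
    simpa [Iic_union_Ici] using hleft.union hright
  · rw [max_eq_left ht.le]
    exact (hpow t).congr_of_eventuallyEq <|
      (eventually_gt_nhds ht).mono fun x hx => Fq_of_nonneg q hx.le

theorem convexOn_Fq (hq : 1 ≤ q) : ConvexOn ℝ univ (Fq q) := by
  have hderiv : deriv (Fq q) = fun t => (max t 0 + 1) ^ (q - 1) :=
    funext fun t => (hasDerivAt_Fq hq t).deriv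
  refine Monotone.convexOn_univ_of_deriv (fun t => (hasDerivAt_Fq hq t).differentiableAt) ?_
  rw [hderiv]
  intro a b hab
  exact Real.rpow_le_rpow (by positivity) (by gcongr) (by linarith)

theorem le_Fq (hq : 1 ≤ q) (t : ℝ) : t ≤ Fq q t := by
  rcases le_total t 0 with ht | ht
  · exact (Fq_of_nonpos q ht).ge
  have hbernoulli : 1 + q * t ≤ (1 + t) ^ q := one_add_mul_self_le_rpow_one_add (by linarith) hq
  rw [Fq_of_nonneg q ht, add_comm t]
  have hq0 : 0 < q := zero_lt_one.trans_le hq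
  calc t = 1 / q * (1 + q * t) - 1 / q := by field_simp; ring
    _ ≤ 1 / q * (1 + t) ^ q - 1 / q := by gcongr

theorem Fq_le (hq : 1 ≤ q) (t : ℝ) : Fq q t ≤ 2 ^ q * (1 + |t| ^ q) := by
  have hq0 : 0 < q := zero_lt_one.trans_le hq
  have hrhs : 0 ≤ 2 ^ q * (1 + |t| ^ q) := by positivity
  rcases le_total t 0 with ht | ht
  · rw [Fq_of_nonpos q ht]
    linarith
  rw [Fq_of_nonneg q ht, abs_of_nonneg ht]
  have hmax : max t 1 ^ q ≤ 1 + t ^ q := by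
    rcases le_total t 1 with h | h
    · rw [max_eq_right h, Real.one_rpow]
      linarith [Real.rpow_nonneg ht q]
    · rw [max_eq_left h]
      linarith
  have hpow : (t + 1) ^ q ≤ 2 ^ q * (1 + t ^ q) :=
    calc (t + 1) ^ q ≤ (2 * max t 1) ^ q := by
          gcongr
          linarith [le_max_left t 1, le_max_right t 1]
      _ = 2 ^ q * max t 1 ^ q := Real.mul_rpow zero_le_two (by positivity)
      _ ≤ 2 ^ q * (1 + t ^ q) := by gcongr
  have hshrink : 1 / q * (t + 1) ^ q ≤ (t + 1) ^ q :=
    mul_le_of_le_one_left (by positivity) ((div_le_one hq0).2 hq)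
  have : 0 < 1 / q := by positivity
  linarith

theorem exists_Fq_growth (hq : 1 ≤ q) :
    ∃ c : ℝ, 0 < c ∧ ∀ t : ℝ, t - c ≤ Fq q t ∧ Fq q t ≤ c * (1 + |t| ^ q) :=
  ⟨2 ^ q, by positivity, fun t =>
    ⟨by linarith [le_Fq hq t, (by positivity : (0 : ℝ) < 2 ^ q)], Fq_le hq t⟩⟩

end Integrand

section Sequence

variable {j : ℕ} {x : ℝ}

theorem continuous_vseq (j : ℕ) : Continuous (vseq j) := by
  unfold vseq
  fun_prop

theorem vseq_of_le (hj : 0 < j) (hx : x ≤ 1 / j) : vseq j x = 1 - j * x := by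
  rw [le_div_iff₀' (by positivity)] at hx
  exact max_eq_left (by linarith)

theorem vseq_of_ge (hj : 0 < j) (hx : 1 / j ≤ x) : vseq j x = 0 := by
  rw [div_le_iff₀' (by positivity)] at hx
  exact max_eq_right (by linarith)

theorem vderiv_of_ge (hx : 1 / j ≤ x) : vderiv j x = 0 := if_neg hx.not_gt

theorem vderiv_nonpos (j : ℕ) (x : ℝ) : vderiv j x ≤ 0 := by
  unfold vderiv
  split_ifs <;> simp

theorem abs_vseq_le_one (hx : 0 ≤ x) : |vseq j x| ≤ 1 := by
  rw [vseq, abs_of_nonneg (le_max_right _ _)]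
  exact max_le (by nlinarith [j.cast_nonneg (α := ℝ)]) zero_le_one

theorem hasDerivAt_vseq (hj : 0 < j) (hx : x ≠ 1 / j) : HasDerivAt (vseq j) (vderiv j x) x := by
  rcases hx.lt_or_gt with hx | hx
  · rw [vderiv, if_pos hx]
    have hline : HasDerivAt (fun y : ℝ => 1 - j * y) (-j) x := by
      simpa using ((hasDerivAt_id' x).const_mul (j : ℝ)).const_sub 1
    exact hline.congr_of_eventuallyEq <|
      (eventually_lt_nhds hx).mono fun y hy => vseq_of_le hj hy.le
  · rw [vderiv_of_ge hx.le]
    exact (hasDerivAt_const x 0).congr_of_eventuallyEq <|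
      (eventually_gt_nhds hx).mono fun y hy => vseq_of_ge hj hy.le

theorem eventually_one_div_natCast_le {a : ℝ} (ha : 0 < a) :
    ∀ᶠ j : ℕ in atTop, 1 / (j : ℝ) ≤ a :=
  tendsto_one_div_atTop_nhds_zero_nat.eventually (eventually_le_nhds ha)

theorem tendsto_vseq_atTop (hx : 0 < x) : Tendsto (vseq · x) atTop (𝓝 0) :=
  tendsto_const_nhds.congr' <| ((eventually_gt_atTop 0).and (eventually_one_div_natCast_le hx)).mono
    fun _ hj => (vseq_of_ge hj.1 hj.2).symm

theorem tendsto_integral_abs_vseq :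
    Tendsto (fun j : ℕ => ∫ x in Ioo (0 : ℝ) 1, |vseq j x|) atTop (𝓝 0) := by
  have hlim := tendsto_integral_of_dominated_convergence (μ := volume.restrict (Ioo (0 : ℝ) 1))
    (F := fun j x => |vseq j x|) (f := 0) (fun _ => 1)
    (fun j => (continuous_vseq j).abs.aestronglyMeasurable)
    (integrable_const 1)
    (fun j => ae_restrict_of_forall_mem measurableSet_Ioo fun x hx => by
      simpa using abs_vseq_le_one hx.1.le)
    (ae_restrict_of_forall_mem measurableSet_Ioo fun x hx => by
      simpa using (tendsto_vseq_atTop hx.1).abs)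
  simpa using hlim

theorem tendsto_integral_mul_vderiv {φ : ℝ → ℝ} (hφ : φ =ᶠ[𝓝 0] 0) :
    Tendsto (fun j : ℕ => ∫ x in Ioo (0 : ℝ) 1, φ x * vderiv j x) atTop (𝓝 0) := by
  obtain ⟨ε, hε, hφε⟩ := Metric.eventually_nhds_iff.1 hφ
  refine tendsto_const_nhds.congr' <| (eventually_one_div_natCast_le hε).mono fun j hj => ?_
  refine (setIntegral_eq_zero_of_forall_eq_zero fun x hx => ?_).symm
  by_cases hxj : x < 1 / j
  · have : φ x = 0 := hφε (by rw [Real.dist_0_eq_abs, abs_of_pos hx.1]; linarith)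
    rw [this, zero_mul]
  · rw [vderiv_of_ge (not_lt.1 hxj), mul_zero]

theorem integral_vderiv (hj : 0 < j) : ∫ x in Ioo (0 : ℝ) 1, vderiv j x = -1 := by
  have hint : IntervalIntegrable (vderiv j) volume 0 1 :=
    (intervalIntegrable_const (c := (j : ℝ))).mono_fun
      (Measurable.ite (measurableSet_Iio : MeasurableSet {x : ℝ | x < 1 / j}) measurable_const
        measurable_const).aestronglyMeasurable
      (ae_of_all _ fun x => by simp only [vderiv]; split_ifs <;> simp)
  have hftc := integral_eq_of_hasDerivAt_off_countable_of_le (vseq j) (vderiv j) zero_le_one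
    (countable_singleton (1 / (j : ℝ))) (continuous_vseq j).continuousOn
    (fun x hx => hasDerivAt_vseq hj hx.2) hint
  rw [intervalIntegral.integral_of_le zero_le_one, integral_Ioc_eq_integral_Ioo] at hftc
  have hj1 : 1 / (j : ℝ) ≤ 1 := (div_le_one (by positivity)).2 (by exact_mod_cast hj)
  rw [hftc, vseq_of_ge hj hj1, vseq_of_le hj (by positivity)]
  simp

theorem integral_Fq_vderiv (q : ℝ) (j : ℕ) :
    ∫ x in Ioo (0 : ℝ) 1, Fq q (vderiv j x) = ∫ x in Ioo (0 : ℝ) 1, vderiv j x := by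
  congr 1 with x
  exact Fq_of_nonpos q (vderiv_nonpos j x)

end Sequence

/-- Example 4.2: `F_q` is convex with `t − c ≤ F_q(t) ≤ c(1+|t|^q)`; the sequence
`v_j` converges to `u ≡ 0` weakly-* in `BV(0,1)` (L¹-convergence plus weak*-convergence
of the derivative measures), yet `∫₀¹ F_q(v_j') dx = −1` for each `j ≥ 1` while
`∫₀¹ F_q(u') dx = F_q(0)·1 = 0`; hence `v ↦ ∫₀¹ F_q(v') dx` is not sequentially
weak*-lower semicontinuous on `BV(0,1)`. -/
theorem Fq_concentration_failure_of_lsc (q : ℝ) (hq : 1 ≤ q) :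
    ConvexOn ℝ Set.univ (Fq q) ∧
    (∃ c : ℝ, 0 < c ∧ ∀ t : ℝ, t - c ≤ Fq q t ∧ Fq q t ≤ c * (1 + |t| ^ q)) ∧
    (∀ j : ℕ, 1 ≤ j → ∀ x ∈ Set.Ioo (0 : ℝ) 1, x ≠ 1 / (j : ℝ) →
      HasDerivAt (vseq j) (vderiv j x) x) ∧
    Filter.Tendsto (fun j : ℕ => ∫ x in Set.Ioo (0 : ℝ) 1, |vseq j x|)
      Filter.atTop (nhds 0) ∧
    (∀ φ : ℝ → ℝ, Continuous φ → HasCompactSupport φ →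
      tsupport φ ⊆ Set.Ioo (0 : ℝ) 1 →
      Filter.Tendsto (fun j : ℕ => ∫ x in Set.Ioo (0 : ℝ) 1, φ x * vderiv j x)
        Filter.atTop (nhds 0)) ∧
    (∀ j : ℕ, 1 ≤ j → ∫ x in Set.Ioo (0 : ℝ) 1, Fq q (vderiv j x) = -1) ∧
    (-1 : ℝ) < 0 ∧ Fq q 0 = 0 :=
  ⟨convexOn_Fq hq, exists_Fq_growth hq, fun _ hj _ _ hx => hasDerivAt_vseq hj hx,
    tendsto_integral_abs_vseq,
    fun _ _ _ hsupp => tendsto_integral_mul_vderiv <|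
      notMem_tsupport_iff_eventuallyEq.1 fun h0 => (hsupp h0).1.false,
    fun j hj => (integral_Fq_vderiv q j).trans (integral_vderiv hj), neg_one_lt_zero, Fq_zero q⟩
end
end
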